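/- Let R₊ be the orthogonal projection of L²(𝕋) onto the closed linear span of {eₙ : n ≥ 0}, where eₙ(e^{iθ}) = e^{inθ}. Let f be a continuous function on 𝕋, let g = conj(f), and define W = M_g∘[M_f, R₊] − M_f∘[M_g, R₊] on L²(𝕋). Then the operator R₊∘W∘R₊ is compact. -/

import Mathlib

open MeasureTheory AddCircle
open scoped Real ENNReal

instance : Fact (0 < 2 * π) := ⟨by positivity⟩

/-- The Hardy subspace `H²` of `L²(𝕋)`: the closed linear span of `{eₙ : n ≥ 0}`. -/
noncomputable def hardySubmodule :
    Submodule ℂ (Lp ℂ 2 (@haarAddCircle (2 * π) _)) :=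
  (Submodule.span ℂ (Set.range fun n : ℕ => fourierLp 2 (n : ℤ))).topologicalClosure

instance : CompleteSpace hardySubmodule :=
  Submodule.topologicalClosure.completeSpace _

/-- The Riesz projection `R₊`: the orthogonal projection of `L²(𝕋)` onto the Hardy space. -/
noncomputable def rieszPlus :
    Lp ℂ 2 (@haarAddCircle (2 * π) _) →L[ℂ] Lp ℂ 2 (@haarAddCircle (2 * π) _) :=
  hardySubmodule.subtypeL ∘L Submodule.orthogonalProjectionOnto hardySubmodule

/-!
Since `R₊` is idempotent, `R₊WR₊ = R₊M_g H_f − R₊M_f H_g` with `H_h = (1 − R₊) M_h R₊`.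
For a character `h = eₘ` the operator `H_h` sends `eₙ` to `eₘ₊ₙ` or to `0`, and it is nonzero only
for `m ≤ m + n < 0`, so it has finite rank. As `h ↦ H_h` is continuous and linear and the compact
operators form a closed subspace, density of trigonometric polynomials in `C(𝕋)` makes every `H_h`
compact.
-/

section MulOperator

variable {α 𝕜 : Type*} [TopologicalSpace α] [CompactSpace α] [MeasurableSpace α] [BorelSpace α]
  [NontriviallyNormedField 𝕜] [SecondCountableTopologyEither α 𝕜]
  (μ : Measure α) [IsFiniteMeasure μ] (p : ℝ≥0∞) [Fact (1 ≤ p)]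

noncomputable def ContinuousMap.mulLp : C(α, 𝕜) →L[𝕜] Lp 𝕜 p μ →L[𝕜] Lp 𝕜 p μ :=
  (ContinuousLinearMap.mul 𝕜 𝕜).holderL μ ∞ p p ∘L ContinuousMap.toLp ∞ μ 𝕜

variable {μ p}

theorem ContinuousMap.coeFn_mulLp_apply (h : C(α, 𝕜)) (u : Lp 𝕜 p μ) :
    h.mulLp μ p u =ᵐ[μ] fun x => h x * u x := by
  filter_upwards [(ContinuousLinearMap.mul 𝕜 𝕜).coeFn_holder (r := p) (toLp ∞ μ 𝕜 h) u,
    ContinuousMap.coeFn_toLp (E := 𝕜) (p := ∞) (𝕜 := 𝕜) μ h] with x hx hh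
  simp only [mulLp, ContinuousLinearMap.comp_apply, ContinuousLinearMap.holderL_apply_apply,
    hx, hh]
  rfl

theorem ContinuousMap.eq_mulLp_of_ae (h : C(α, 𝕜)) {M : Lp 𝕜 p μ →L[𝕜] Lp 𝕜 p μ}
    (hM : ∀ u, M u =ᵐ[μ] fun x => h x * u x) : M = h.mulLp μ p :=
  ContinuousLinearMap.ext fun u => Lp.ext <| (hM u).trans (h.coeFn_mulLp_apply u).symm

end MulOperator

theorem IsCompactOperator.of_forall_mem_finiteDimensional {𝕜 E F : Type*}
    [NontriviallyNormedField 𝕜] [ProperSpace 𝕜] [NormedAddCommGroup E] [NormedSpace 𝕜 E]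
    [NormedAddCommGroup F] [NormedSpace 𝕜 F]
    (T : E →L[𝕜] F) (S : Submodule 𝕜 F) [FiniteDimensional 𝕜 S] (hT : ∀ u, T u ∈ S) :
    IsCompactOperator T :=
  have : ProperSpace S := FiniteDimensional.proper 𝕜 S
  (isCompactOperator_of_locallyCompactSpace_dom (T.codRestrict S hT)).clm_comp S.subtypeL

theorem IsIdempotentElem.mul_commutator_sub_commutator_mul {R : Type*} [Ring R] {p : R}
    (hp : IsIdempotentElem p) (a b : R) :
    p * ((b * (a * p - p * a) - a * (b * p - p * b)) * p)
      = p * b * ((1 - p) * (a * p)) - p * a * ((1 - p) * (b * p)) := by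
  have hp' : p * p = p := hp
  simp only [mul_sub, sub_mul, one_mul, mul_assoc, hp']

local notation "L²" => Lp ℂ 2 (@haarAddCircle (2 * π) _)

theorem isIdempotentElem_rieszPlus : IsIdempotentElem rieszPlus :=
  hardySubmodule.isIdempotentElem_starProjection

theorem fourierLp_mem_hardySubmodule {n : ℤ} (hn : 0 ≤ n) :
    fourierLp 2 n ∈ hardySubmodule :=
  Submodule.le_topologicalClosure _ <| Submodule.subset_span ⟨n.toNat, by simp [hn]⟩

theorem fourierLp_mem_hardySubmodule_orthogonal {n : ℤ} (hn : n < 0) :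
    fourierLp 2 n ∈ hardySubmoduleᗮ := by
  rw [hardySubmodule, Submodule.orthogonal_closure, ← Submodule.span_singleton_le_iff_mem,
    ← Submodule.isOrtho_iff_le, Submodule.isOrtho_span]
  rintro _ rfl _ ⟨k, rfl⟩
  exact orthonormal_fourier.2 (by omega)

theorem rieszPlus_fourierLp (n : ℤ) :
    rieszPlus (fourierLp 2 n) = if 0 ≤ n then fourierLp 2 n else 0 := by
  split_ifs with hn
  · exact hardySubmodule.starProjection_eq_self_iff.2 (fourierLp_mem_hardySubmodule hn)
  · exact hardySubmodule.starProjection_apply_eq_zero_iff.2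
      (fourierLp_mem_hardySubmodule_orthogonal (by omega))

theorem mulLp_fourier_fourierLp (m n : ℤ) :
    (fourier m).mulLp haarAddCircle 2 (fourierLp 2 n) = (fourierLp 2 (m + n) : L²) := by
  refine Lp.ext ?_
  filter_upwards [(fourier m).coeFn_mulLp_apply (fourierLp 2 n), coeFn_fourierLp 2 n,
    coeFn_fourierLp 2 (m + n)] with x h1 h2 h3
  rw [h1, h2, h3, fourier_add]

noncomputable def hankelOperator (h : C(AddCircle (2 * π), ℂ)) : L² →L[ℂ] L² :=
  (1 - rieszPlus) ∘L h.mulLp haarAddCircle 2 ∘L rieszPlus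

theorem hankelOperator_fourier_fourierLp (m n : ℤ) :
    hankelOperator (fourier m) (fourierLp 2 n)
      = if 0 ≤ n ∧ m + n < 0 then fourierLp 2 (m + n) else 0 := by
  by_cases hn : 0 ≤ n <;> by_cases hmn : 0 ≤ m + n <;>
    simp [hankelOperator, rieszPlus_fourierLp, mulLp_fourier_fourierLp, hn, hmn]

theorem isCompactOperator_hankelOperator_fourier (m : ℤ) :
    IsCompactOperator (hankelOperator (fourier m)) := by
  let S : Submodule ℂ L² := Submodule.span ℂ (fourierLp 2 '' Set.Ico m 0)
  have : FiniteDimensional ℂ S := .span_of_finite ℂ ((Set.finite_Ico m 0).image _)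
  have hbasis : Submodule.span ℂ (Set.range (fourierLp 2))
      ≤ S.comap (hankelOperator (fourier m)).toLinearMap := by
    rw [Submodule.span_le]
    rintro _ ⟨n, rfl⟩
    rw [SetLike.mem_coe, Submodule.mem_comap, ContinuousLinearMap.coe_coe,
      hankelOperator_fourier_fourierLp]
    split_ifs with h
    · exact Submodule.subset_span ⟨m + n, ⟨by omega, h.2⟩, rfl⟩
    · exact S.zero_mem
  have hall := Submodule.topologicalClosure_minimal _ hbasis
    (S.closed_of_finiteDimensional.preimage (hankelOperator (fourier m)).continuous)
  rw [span_fourierLp_closure_eq_top (by norm_num)] at hall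
  exact .of_forall_mem_finiteDimensional _ S fun u => hall Submodule.mem_top

theorem isCompactOperator_hankelOperator (h : C(AddCircle (2 * π), ℂ)) :
    IsCompactOperator (hankelOperator h) := by
  let Φ : C(AddCircle (2 * π), ℂ) →L[ℂ] L² →L[ℂ] L² :=
    ContinuousLinearMap.compL ℂ L² L² L² (1 - rieszPlus) ∘L
      (ContinuousLinearMap.compL ℂ L² L² L²).flip rieszPlus ∘L ContinuousMap.mulLp _ 2
  let K := (compactOperator (RingHom.id ℂ) L² L²).comap Φ.toLinearMap
  have hfourier : Submodule.span ℂ (Set.range fourier) ≤ K := by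
    rw [Submodule.span_le]
    rintro _ ⟨m, rfl⟩
    exact isCompactOperator_hankelOperator_fourier m
  have hall := Submodule.topologicalClosure_minimal _ hfourier
    (isClosed_setOfPred_isCompactOperator.preimage Φ.continuous)
  rw [span_fourier_closure_eq_top] at hall
  exact hall Submodule.mem_top

/-- For continuous `f` on `𝕋` and `g = conj f`, the compression `R₊WR₊` of
`W = M_g[M_f,R₊] − M_f[M_g,R₊]` is a compact operator. -/
theorem stmt_16 (f : C(AddCircle (2 * π), ℂ)) (g : AddCircle (2 * π) → ℂ)
    (hfg : g = fun x => starRingEnd ℂ (f x))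
    (Mf Mg : Lp ℂ 2 (@haarAddCircle (2 * π) _) →L[ℂ] Lp ℂ 2 (@haarAddCircle (2 * π) _))
    (hMf : ∀ u : Lp ℂ 2 (@haarAddCircle (2 * π) _),
      (Mf u : AddCircle (2 * π) → ℂ) =ᵐ[@haarAddCircle (2 * π) _] fun x => f x * u x)
    (hMg : ∀ u : Lp ℂ 2 (@haarAddCircle (2 * π) _),
      (Mg u : AddCircle (2 * π) → ℂ) =ᵐ[@haarAddCircle (2 * π) _] fun x => g x * u x)
    (W : Lp ℂ 2 (@haarAddCircle (2 * π) _) →L[ℂ] Lp ℂ 2 (@haarAddCircle (2 * π) _))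
    (hW : W = Mg ∘L (Mf ∘L rieszPlus - rieszPlus ∘L Mf)
            - Mf ∘L (Mg ∘L rieszPlus - rieszPlus ∘L Mg)) :
    IsCompactOperator ⇑(rieszPlus ∘L W ∘L rieszPlus) := by
  subst hfg hW
  obtain rfl : Mf = f.mulLp haarAddCircle 2 := f.eq_mulLp_of_ae hMf
  obtain rfl : Mg = (star f).mulLp haarAddCircle 2 := (star f).eq_mulLp_of_ae hMg
  simp only [← ContinuousLinearMap.mul_def]
  rw [isIdempotentElem_rieszPlus.mul_commutator_sub_commutator_mul (f.mulLp haarAddCircle 2)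
    ((star f).mulLp haarAddCircle 2)]
  have hankel_eq : ∀ h : C(AddCircle (2 * π), ℂ),
      (1 - rieszPlus) * (h.mulLp haarAddCircle 2 * rieszPlus) = hankelOperator h := fun _ => rfl
  rw [hankel_eq, hankel_eq, FunLike.coe_sub]
  simp only [ContinuousLinearMap.mul_def, ContinuousLinearMap.coe_comp]
  exact ((isCompactOperator_hankelOperator f).continuous_comp (by fun_prop)).sub
    ((isCompactOperator_hankelOperator (star f)).continuous_comp (by fun_prop))
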